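/- Let $c : [a,b] \to \mathbb{R}$ be continuous with $c \geq 0$, and let $\phi : [a,b] \to \mathbb{R}$ be twice continuously differentiable with $\phi'' = c\,\phi$ on $(a,b)$, $\phi(a) \geq 0$, and $\phi(b) \geq 0$. Then $\phi \geq 0$ on all of $[a,b]$. Moreover, if $\phi(b) > 0$ then $\phi > 0$ on $(a,b]$. -/

import Mathlib

/-!
Where `φ < 0` the equation gives `φ'' = c φ ≤ 0`, so on a maximal interval of negativity `φ` is
concave with nonnegative values at the ends, hence nonnegative: a contradiction. If `φ ≥ 0`
vanishes at an interior point `x`, then `x` is a minimum, so `φ'(x) = 0` as well, and Grönwall's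
inequality for the first-order system `(φ, φ')' = (φ', c φ)` forces `φ ≡ 0` on `[x, b]`.
-/

open Set

theorem exists_nonneg_forall_Ioc_neg {f : ℝ → ℝ} {a x : ℝ} (hax : a ≤ x)
    (hf : ContinuousOn f (Icc a x)) (ha : 0 ≤ f a) :
    ∃ u ∈ Icc a x, 0 ≤ f u ∧ ∀ y ∈ Ioc u x, f y < 0 := by
  set S := Icc a x ∩ f ⁻¹' Ici 0
  have hS : IsClosed S := hf.preimage_isClosed_of_isClosed isClosed_Icc isClosed_Ici
  have hbdd : BddAbove S := ⟨x, fun y hy => hy.1.2⟩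
  obtain ⟨hu, hfu⟩ : sSup S ∈ S := hS.csSup_mem ⟨a, ⟨left_mem_Icc.2 hax, ha⟩⟩ hbdd
  refine ⟨sSup S, hu, hfu, fun y hy => not_le.1 fun hfy => ?_⟩
  exact hy.1.not_ge (le_csSup hbdd ⟨⟨hu.1.trans hy.1.le, hy.2⟩, hfy⟩)

theorem exists_nonneg_forall_Ico_neg {f : ℝ → ℝ} {x b : ℝ} (hxb : x ≤ b)
    (hf : ContinuousOn f (Icc x b)) (hb : 0 ≤ f b) :
    ∃ v ∈ Icc x b, 0 ≤ f v ∧ ∀ y ∈ Ico x v, f y < 0 := by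
  set T := Icc x b ∩ f ⁻¹' Ici 0
  have hT : IsClosed T := hf.preimage_isClosed_of_isClosed isClosed_Icc isClosed_Ici
  have hbdd : BddBelow T := ⟨x, fun y hy => hy.1.1⟩
  obtain ⟨hv, hfv⟩ : sInf T ∈ T := hT.csInf_mem ⟨b, ⟨right_mem_Icc.2 hxb, hb⟩⟩ hbdd
  refine ⟨sInf T, hv, hfv, fun y hy => not_le.1 fun hfy => ?_⟩
  exact hy.2.not_ge (csInf_le hbdd ⟨⟨hy.1, hy.2.le.trans hv.2⟩, hfy⟩)

theorem nonneg_of_concaveOn_of_forall_neg {f : ℝ → ℝ} {a b : ℝ}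
    (hf : ContinuousOn f (Icc a b)) (ha : 0 ≤ f a) (hb : 0 ≤ f b)
    (hconc : ∀ u v, a ≤ u → v ≤ b → (∀ y ∈ Ioo u v, f y < 0) → ConcaveOn ℝ (Icc u v) f) :
    ∀ x ∈ Icc a b, 0 ≤ f x := by
  intro x hx
  by_contra! hfx
  obtain ⟨u, hu, hfu, hleft⟩ :=
    exists_nonneg_forall_Ioc_neg hx.1 (hf.mono (Icc_subset_Icc_right hx.2)) ha
  obtain ⟨v, hv, hfv, hright⟩ :=
    exists_nonneg_forall_Ico_neg hx.2 (hf.mono (Icc_subset_Icc_left hx.1)) hb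
  have hneg : ∀ y ∈ Ioo u v, f y < 0 := fun y hy =>
    (le_total y x).elim (fun hyx => hleft y ⟨hy.1, hyx⟩) fun hxy => hright y ⟨hxy, hy.2⟩
  have hmin := (hconc u v hu.1 hv.2 hneg).min_le_of_mem_Icc
    (left_mem_Icc.2 (hu.2.trans hv.1)) (right_mem_Icc.2 (hu.2.trans hv.1)) ⟨hu.2, hv.1⟩
  exact hfx.not_ge (le_trans (le_min hfu hfv) hmin)

theorem eqOn_zero_of_hasDerivAt_of_norm_le {φ ψ c : ℝ → ℝ} {x y M : ℝ}
    (hφ : ContinuousOn φ (Icc x y)) (hψ : ContinuousOn ψ (Icc x y))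
    (hφ' : ∀ t ∈ Ico x y, HasDerivAt φ (ψ t) t)
    (hψ' : ∀ t ∈ Ico x y, HasDerivAt ψ (c t * φ t) t)
    (hc : ∀ t ∈ Ico x y, ‖c t‖ ≤ M) (hφx : φ x = 0) (hψx : ψ x = 0) :
    EqOn φ 0 (Icc x y) := by
  have hbound : ∀ t ∈ Ico x y,
      ‖(ψ t, c t * φ t)‖ ≤ max M 1 * ‖(φ t, ψ t)‖ + 0 := by
    intro t ht
    rw [add_zero, Prod.norm_def, Prod.norm_def, norm_mul]
    have hφt : ‖φ t‖ ≤ max ‖φ t‖ ‖ψ t‖ := le_max_left _ _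
    have hψt : ‖ψ t‖ ≤ max ‖φ t‖ ‖ψ t‖ := le_max_right _ _
    have hM : ‖c t‖ ≤ max M 1 := (hc t ht).trans (le_max_left _ _)
    have h1 : (1 : ℝ) ≤ max M 1 := le_max_right _ _
    refine max_le ?_ ?_
    · nlinarith [norm_nonneg (ψ t)]
    · nlinarith [norm_nonneg (c t), norm_nonneg (φ t)]
  intro t ht
  have h := norm_le_gronwallBound_of_norm_deriv_right_le (δ := 0) (hφ.prodMk hψ)
    (fun t ht => ((hφ' t ht).prodMk (hψ' t ht)).hasDerivWithinAt) (by simp [hφx, hψx])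
    hbound t ht
  rw [gronwallBound_ε0_δ0, norm_le_zero_iff] at h
  exact congrArg Prod.fst h

section SecondOrder

variable {a b : ℝ} {c φ : ℝ → ℝ}

theorem concaveOn_Icc_of_deriv_deriv_eq_mul {u v : ℝ} (hu : a ≤ u) (hv : v ≤ b)
    (hφ : ContinuousOn φ (Icc a b)) (hφ' : DifferentiableOn ℝ φ (Ioo a b))
    (hφ'' : DifferentiableOn ℝ (deriv φ) (Ioo a b)) (hc0 : ∀ x ∈ Icc a b, 0 ≤ c x)
    (hode : ∀ x ∈ Ioo a b, deriv (deriv φ) x = c x * φ x)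
    (hneg : ∀ y ∈ Ioo u v, φ y < 0) : ConcaveOn ℝ (Icc u v) φ := by
  have hsub : Ioo u v ⊆ Ioo a b := Ioo_subset_Ioo hu hv
  refine concaveOn_of_deriv2_nonpos (convex_Icc u v) (hφ.mono (Icc_subset_Icc hu hv)) ?_ ?_ ?_
    <;> rw [interior_Icc]
  · exact hφ'.mono hsub
  · exact hφ''.mono hsub
  · intro y hy
    rw [Function.iterate_succ_apply, Function.iterate_one, hode y (hsub hy)]
    exact mul_nonpos_of_nonneg_of_nonpos (hc0 y (Ioo_subset_Icc_self (hsub hy))) (hneg y hy).le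

theorem eqOn_zero_Icc_of_deriv_deriv_eq_mul {x : ℝ} (hx : x ∈ Ioo a b)
    (hφ : ContinuousOn φ (Icc a b)) (hφ' : DifferentiableOn ℝ φ (Ioo a b))
    (hφ'' : DifferentiableOn ℝ (deriv φ) (Ioo a b)) (hc : ContinuousOn c (Icc a b))
    (hode : ∀ x ∈ Ioo a b, deriv (deriv φ) x = c x * φ x)
    (hφx : φ x = 0) (hφ'x : deriv φ x = 0) :
    EqOn φ 0 (Icc x b) := by
  have hzero : EqOn φ 0 (Ioo x b) := fun y hy => by
    have hsub : Icc x y ⊆ Ioo a b := Icc_subset_Ioo hx.1 hy.2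
    obtain ⟨M, hM⟩ := isCompact_Icc.exists_bound_of_continuousOn
      (hc.mono (hsub.trans Ioo_subset_Icc_self))
    have hnhds : ∀ t ∈ Ico x y, Ioo a b ∈ nhds t :=
      fun t ht => isOpen_Ioo.mem_nhds (hsub (Ico_subset_Icc_self ht))
    refine eqOn_zero_of_hasDerivAt_of_norm_le (hφ'.continuousOn.mono hsub)
      (hφ''.continuousOn.mono hsub) (fun t ht => hφ'.hasDerivAt (hnhds t ht))
      (fun t ht => ?_) (fun t ht => hM t (Ico_subset_Icc_self ht)) hφx hφ'x
      (right_mem_Icc.2 hy.1.le)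
    rw [← hode t (hsub (Ico_subset_Icc_self ht))]
    exact hφ''.hasDerivAt (hnhds t ht)
  refine hzero.of_subset_closure (hφ.mono (Icc_subset_Icc_left hx.1.le)) continuousOn_const
    Ioo_subset_Icc_self (closure_Ioo hx.2.ne).ge

end SecondOrder

theorem ode_maximum_principle_general (a b : ℝ) (c φ : ℝ → ℝ)
    (hc : ContinuousOn c (Set.Icc a b)) (hc0 : ∀ x ∈ Set.Icc a b, 0 ≤ c x)
    (hφ : ContDiffOn ℝ 2 φ (Set.Icc a b))
    (hode : ∀ x ∈ Set.Ioo a b, deriv (deriv φ) x = c x * φ x)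
    (hφa : 0 ≤ φ a) (hφb : 0 ≤ φ b) :
    (∀ x ∈ Set.Icc a b, 0 ≤ φ x) ∧
      (0 < φ b → ∀ x ∈ Set.Ioc a b, 0 < φ x) := by
  have hφo : ContDiffOn ℝ 2 φ (Ioo a b) := hφ.mono Ioo_subset_Icc_self
  have hφ' : DifferentiableOn ℝ φ (Ioo a b) := hφo.differentiableOn two_ne_zero
  have hφ'' : DifferentiableOn ℝ (deriv φ) (Ioo a b) :=
    (hφo.deriv_of_isOpen isOpen_Ioo (m := 1) le_rfl).differentiableOn one_ne_zero
  have hnonneg : ∀ x ∈ Icc a b, 0 ≤ φ x :=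
    nonneg_of_concaveOn_of_forall_neg hφ.continuousOn hφa hφb fun _ _ hu hv hneg =>
      concaveOn_Icc_of_deriv_deriv_eq_mul hu hv hφ.continuousOn hφ' hφ'' hc0 hode hneg
  refine ⟨hnonneg, fun hb x hx => (hnonneg x (Ioc_subset_Icc_self hx)).lt_of_ne' fun hφx => ?_⟩
  have hxb : x < b := hx.2.lt_of_ne (by rintro rfl; exact hb.ne' hφx)
  have hmin : IsLocalMin φ x :=
    IsMinOn.isLocalMin (fun y hy => hφx ▸ hnonneg y hy) (Icc_mem_nhds hx.1 hxb)
  exact hb.ne' (eqOn_zero_Icc_of_deriv_deriv_eq_mul ⟨hx.1, hxb⟩ hφ.continuousOn hφ' hφ'' hc hode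
    hφx hmin.deriv_eq_zero (right_mem_Icc.2 hxb.le))

/-- One-dimensional maximum principle: if `φ'' = c φ` with `c ≥ 0` continuous and
`φ ≥ 0` at the endpoints, then `φ ≥ 0` on `[a,b]`; if moreover `φ(b) > 0` then
`φ > 0` on `(a,b]`. -/
theorem ode_maximum_principle (a b : ℝ) (hab : a < b) (c φ : ℝ → ℝ)
    (hc : ContinuousOn c (Set.Icc a b)) (hc0 : ∀ x ∈ Set.Icc a b, 0 ≤ c x)
    (hφ : ContDiffOn ℝ 2 φ (Set.Icc a b))
    (hode : ∀ x ∈ Set.Ioo a b, deriv (deriv φ) x = c x * φ x)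
    (hφa : 0 ≤ φ a) (hφb : 0 ≤ φ b) :
    (∀ x ∈ Set.Icc a b, 0 ≤ φ x) ∧
      (0 < φ b → ∀ x ∈ Set.Ioc a b, 0 < φ x) :=
  ode_maximum_principle_general a b c φ hc hc0 hφ hode hφa hφb
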